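/- arXiv:1604.05111 — 2 statements merged into one kernel-verified Lean document; each statement's English description precedes it below -/
import Mathlib

section
/- If S is a stopping set of a Tanner graph and all variable nodes in S are erased, then no message-passing erasure decoder whose check-node rule resolves a message to v only when all other incoming messages at that check are resolved can ever resolve any variable node in S: every message sent from a check node adjacent to S toward a variable node of S remains erased in every iteration. -/
/-- `S` is a stopping set: every check node adjacent to `S` has at least two neighbors in `S`. -/
def IsStoppingSet {V C : Type*} (N : C → Set V) (S : Set V) : Prop :=
  ∀ c : C, (∃ v ∈ S, v ∈ N c) → ∃ v₁ ∈ S, ∃ v₂ ∈ S, v₁ ≠ v₂ ∧ v₁ ∈ N c ∧ v₂ ∈ N c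

/-- If `S` is a stopping set all of whose variable nodes are erased, then for any
message-passing erasure decoder whose check-node rule resolves `m_{c→v}` only when all other
incoming messages at `c` are resolved, and whose variable-node rule resolves `m_{v→c}` from an
erased `v` only when some earlier incoming check-to-variable message was resolved, no
check-to-variable message sent toward a variable node of `S` (and no variable-to-check message
out of `S`) is ever resolved: every such message remains erased in every iteration.
Messages are modeled as `Prop`-valued (`True` = resolved). -/
theorem stopping_set_stays_erased {V C : Type*}
    (N : C → Set V) (Nv : V → Set C)
    (hadj : ∀ v c, c ∈ Nv v ↔ v ∈ N c)
    (S : Set V) (hS : IsStoppingSet N S)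
    (mvc : ℕ → V → C → Prop) (mcv : ℕ → C → V → Prop)
    -- check-node rule ("only if" direction):
    (hcheck : ∀ ℓ c v, mcv ℓ c v → ∀ v' ∈ N c, v' ≠ v → mvc ℓ v' c)
    -- variable-node rule for erased variable nodes ("only if" direction):
    (hvar : ∀ ℓ v c, v ∈ S → mvc (ℓ + 1) v c → ∃ c' ∈ Nv v, mcv ℓ c' v)
    -- initially, all messages out of erased variable nodes are erased:
    (hinit : ∀ v c, v ∈ S → ¬ mvc 0 v c) :
    (∀ ℓ c v, v ∈ S → v ∈ N c → ¬ mcv ℓ c v) ∧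
    (∀ ℓ v c, v ∈ S → ¬ mvc ℓ v c) := by
  have key : ∀ ℓ v c, v ∈ S → ¬ mvc ℓ v c := by
    intro ℓ
    induction ℓ with
    | zero => exact fun v c hv => hinit v c hv
    | succ n ih =>
      intro v c hv h
      obtain ⟨c', hc', hm⟩ := hvar n v c hv h
      have hvN : v ∈ N c' := (hadj v c').mp hc'
      obtain ⟨v₁, hv₁, v₂, hv₂, hne, hN₁, hN₂⟩ := hS c' ⟨v, hv, hvN⟩
      rcases eq_or_ne v₁ v with h1 | h1
      · exact ih v₂ c' hv₂ (hcheck n c' v hm v₂ hN₂ (h1 ▸ hne.symm))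
      · exact ih v₁ c' hv₁ (hcheck n c' v hm v₁ hN₁ h1)
  refine ⟨?_, key⟩
  intro ℓ c v hv hvN h
  obtain ⟨v₁, hv₁, v₂, hv₂, hne, hN₁, hN₂⟩ := hS c ⟨v, hv, hvN⟩
  rcases eq_or_ne v₁ v with h1 | h1
  · exact key ℓ v₂ c hv₂ (hcheck ℓ c v h v₂ hN₂ (h1 ▸ hne.symm))
  · exact key ℓ v₁ c hv₁ (hcheck ℓ c v h v₁ hN₁ h1)
end

section
/- For any transmission realization over the BEC, the parallel peeling decoder and the belief propagation decoder recover exactly the same set of variable nodes at each iteration. -/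
variable {V C : Type*}

/-- Check-to-variable message rule: `m_{c→v}` is resolved iff all incoming variable-to-check
messages from the other neighbors of `c` are resolved. -/
def checkMsg (N : C → Set V) (x : V → C → Prop) (c : C) (v : V) : Prop :=
  ∀ v' ∈ N c, v' ≠ v → x v' c

/-- BP variable-to-check messages over the BEC: `m_{v→c}(0)` is resolved iff `v` is not
erased; `m_{v→c}(ℓ+1)` is resolved iff `v` is not erased or some `m_{c'→v}(ℓ)` with
`c' ∈ N(v) \ {c}` is resolved. -/
def bpMsg (N : C → Set V) (Nv : V → Set C) (E : Set V) : ℕ → V → C → Prop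
  | 0 => fun v _ => v ∉ E
  | ℓ + 1 => fun v c => v ∉ E ∨ ∃ c' ∈ Nv v, c' ≠ c ∧ checkMsg N (bpMsg N Nv E ℓ) c' v

/-- Unresolved variable nodes of the parallel peeling decoder: at each iteration, every check
node of residual degree `1` resolves its unique unresolved neighbor, and all such variable
nodes are removed simultaneously. -/
def ppd (N : C → Set V) (E : Set V) : ℕ → Set V
  | 0 => E
  | ℓ + 1 => {v ∈ ppd N E ℓ | ¬ ∃ c : C, v ∈ N c ∧ N c ∩ ppd N E ℓ = {v}}

lemma ppd_subset (N : C → Set V) (E : Set V) : ∀ ℓ, ppd N E ℓ ⊆ E := by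
  intro ℓ
  induction ℓ with
  | zero => exact fun v h => h
  | succ ℓ ih => exact fun v h => ih h.1

lemma ppd_succ_subset (N : C → Set V) (E : Set V) (ℓ : ℕ) :
    ppd N E (ℓ + 1) ⊆ ppd N E ℓ := fun v h => h.1

lemma bpMsg_mono (N : C → Set V) (Nv : V → Set C) (E : Set V) :
    ∀ ℓ v c, bpMsg N Nv E ℓ v c → bpMsg N Nv E (ℓ + 1) v c := by
  intro ℓ
  induction ℓ with
  | zero => intro v c h; exact Or.inl h
  | succ ℓ ih =>
    intro v c h
    rcases h with h | ⟨c', hc', hne, hchk⟩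
    · exact Or.inl h
    · exact Or.inr ⟨c', hc', hne, fun v' hv' hne' => ih v' c' (hchk v' hv' hne')⟩

lemma bpMsg_not_ppd (N : C → Set V) (Nv : V → Set C)
    (hadj : ∀ v c, c ∈ Nv v ↔ v ∈ N c) (E : Set V) :
    ∀ ℓ v c, bpMsg N Nv E ℓ v c → v ∉ ppd N E ℓ := by
  intro ℓ
  induction ℓ with
  | zero => intro v c h; exact h
  | succ ℓ ih =>
    intro v c h hmem
    rcases h with h | ⟨c', hc', hne, hchk⟩
    · exact h (ppd_subset N E (ℓ + 1) hmem)
    · refine hmem.2 ⟨c', (hadj v c').1 hc', ?_⟩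
      ext v''
      constructor
      · rintro ⟨hv''N, hv''p⟩
        by_contra hne''
        exact ih v'' c' (hchk v'' hv''N hne'') hv''p
      · rintro rfl
        exact ⟨(hadj _ c').1 hc', hmem.1⟩

/-- For any transmission realization over the BEC (i.e. any erased set `E`), the parallel
peeling decoder and the belief propagation decoder recover exactly the same variable nodes at
each iteration: the erased variable nodes resolved by PPD after `ℓ+1` iterations are exactly
those recovered by BP, namely those receiving a resolved check-to-variable message computed
from the iteration-`ℓ` variable-to-check messages. -/
theorem ppd_eq_bp (N : C → Set V) (Nv : V → Set C)
    (hadj : ∀ v c, c ∈ Nv v ↔ v ∈ N c) (E : Set V) :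
    ∀ ℓ : ℕ, E \ ppd N E (ℓ + 1)
      = {v ∈ E | ∃ c ∈ Nv v, checkMsg N (bpMsg N Nv E ℓ) c v} := by
  intro ℓ
  induction ℓ with
  | zero =>
    ext v
    constructor
    · rintro ⟨hvE, hv⟩
      refine ⟨hvE, ?_⟩
      have hex : ∃ c, v ∈ N c ∧ N c ∩ ppd N E 0 = {v} := by
        by_contra hno
        exact hv ⟨hvE, hno⟩
      rcases hex with ⟨c, hvN, hsing⟩
      refine ⟨c, (hadj v c).2 hvN, fun v' hv'N hne hv'E => ?_⟩
      have h2 : v' ∈ N c ∩ ppd N E 0 := ⟨hv'N, hv'E⟩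
      rw [hsing] at h2
      exact hne h2
    · rintro ⟨hvE, c, hc, hchk⟩
      refine ⟨hvE, fun hmem => ?_⟩
      refine hmem.2 ⟨c, (hadj v c).1 hc, ?_⟩
      ext v''
      constructor
      · rintro ⟨hv''N, hv''E⟩
        by_contra hne''
        exact hchk v'' hv''N hne'' hv''E
      · rintro rfl
        exact ⟨(hadj _ c).1 hc, hmem.1⟩
  | succ ℓ ih =>
    ext v
    constructor
    · rintro ⟨hvE, hv⟩
      refine ⟨hvE, ?_⟩
      by_cases hv1 : v ∈ ppd N E (ℓ + 1)
      · -- v peeled exactly at step ℓ+2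
        have hex : ∃ c, v ∈ N c ∧ N c ∩ ppd N E (ℓ + 1) = {v} := by
          by_contra hno
          exact hv ⟨hv1, hno⟩
        rcases hex with ⟨c, hvN, hsing⟩
        refine ⟨c, (hadj v c).2 hvN, fun v' hv'N hne => ?_⟩
        -- v' ∉ ppd (ℓ+1)
        have hv'p : v' ∉ ppd N E (ℓ + 1) := by
          intro hv'p
          have h2 : v' ∈ N c ∩ ppd N E (ℓ + 1) := ⟨hv'N, hv'p⟩
          rw [hsing] at h2
          exact hne h2
        by_cases hv'E : v' ∈ E
        · -- use inner IH
          have : v' ∈ {v ∈ E | ∃ c ∈ Nv v, checkMsg N (bpMsg N Nv E ℓ) c v} := by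
            rw [← ih]; exact ⟨hv'E, hv'p⟩
          rcases this.2 with ⟨c'', hc'', hchk''⟩
          have hcc : c'' ≠ c := by
            rintro rfl
            -- then bpMsg ℓ v c'' holds, so v ∉ ppd ℓ, contradiction
            have hb : bpMsg N Nv E ℓ v c'' := hchk'' v hvN (Ne.symm hne)
            exact bpMsg_not_ppd N Nv hadj E ℓ v c'' hb
              (ppd_succ_subset N E ℓ hv1)
          exact Or.inr ⟨c'', hc'', hcc, hchk''⟩
        · exact Or.inl hv'E
      · -- v peeled earlier: use inner IH and monotonicity
        have : v ∈ {v ∈ E | ∃ c ∈ Nv v, checkMsg N (bpMsg N Nv E ℓ) c v} := by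
          rw [← ih]; exact ⟨hvE, hv1⟩
        rcases this.2 with ⟨c, hc, hchk⟩
        exact ⟨c, hc, fun v' hv' hne => bpMsg_mono N Nv E ℓ v' c (hchk v' hv' hne)⟩
    · rintro ⟨hvE, c, hc, hchk⟩
      refine ⟨hvE, fun hmem => ?_⟩
      refine hmem.2 ⟨c, (hadj v c).1 hc, ?_⟩
      ext v''
      constructor
      · rintro ⟨hv''N, hv''p⟩
        by_contra hne''
        exact bpMsg_not_ppd N Nv hadj E (ℓ + 1) v'' c (hchk v'' hv''N hne'') hv''p
      · rintro rfl
        exact ⟨(hadj _ c).1 hc, hmem.1⟩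
end
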